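/- In the two-player interconnected contest with Tullock contest success function with parameter γ ∈ (0,1], in every Nash equilibrium (e_1, e_2) the sum of the two players' payoffs satisfies Π_1(e_1,e_2) + Π_2(e_1,e_2) = Σ_{k∈B} (1 − 2γ p_1^k p_2^k) v^k = Σ_{k∈B} v^k − (2 c_1 c_2/(c_1 + c_2)) Σ_{k∈B} (e_1^k + e_2^k), where p_i^k are the equilibrium winning probabilities. -/

import Mathlib

open Finset Matrix

/-- Effective effort of a player with spillover matrix `ρ` and effort vector `e`
at battlefield `k`: `y^k = e^k + ∑_{l ≠ k} ρ^{l,k} e^l`. -/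
noncomputable def effY {m : ℕ} (ρ : Matrix (Fin m) (Fin m) ℝ) (e : Fin m → ℝ)
    (k : Fin m) : ℝ :=
  e k + ∑ l ∈ Finset.univ.erase k, ρ l k * e l

/-- Tullock contest success function with parameter `γ`.  When both effective
efforts are `0` this gives `0/0 = 0`, matching the convention. -/
noncomputable def tullock (γ y₁ y₂ : ℝ) : ℝ :=
  y₁ ^ γ / (y₁ ^ γ + y₂ ^ γ)

/-- Payoff of player `i` in the interconnected contest. -/
noncomputable def payoff {m : ℕ} (γ : ℝ) (v : Fin m → ℝ) (c : Fin 2 → ℝ)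
    (ρ : Fin 2 → Matrix (Fin m) (Fin m) ℝ) (e : Fin 2 → Fin m → ℝ) (i : Fin 2) : ℝ :=
  (∑ k, v k * tullock γ (effY (ρ i) (e i) k) (effY (ρ (1 - i)) (e (1 - i)) k))
    - c i * ∑ k, e i k

/-- Pure strategy Nash equilibrium of the interconnected contest:
nonnegative efforts, and no profitable deviation to any nonnegative effort vector. -/
def IsNashEq {m : ℕ} (γ : ℝ) (v : Fin m → ℝ) (c : Fin 2 → ℝ)
    (ρ : Fin 2 → Matrix (Fin m) (Fin m) ℝ) (e : Fin 2 → Fin m → ℝ) : Prop :=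
  (∀ i k, 0 ≤ e i k) ∧
  ∀ (i : Fin 2) (e' : Fin m → ℝ), (∀ k, 0 ≤ e' k) →
    payoff γ v c ρ (Function.update e i e') i ≤ payoff γ v c ρ e i

/-- Winning probability of player `i` at battlefield `k` under profile `e`. -/
noncomputable def eqProb {m : ℕ} (γ : ℝ) (ρ : Fin 2 → Matrix (Fin m) (Fin m) ℝ)
    (e : Fin 2 → Fin m → ℝ) (i : Fin 2) (k : Fin m) : ℝ :=
  tullock γ (effY (ρ i) (e i) k) (effY (ρ (1 - i)) (e (1 - i)) k)

/-! Scaling one's own effort vector by `t` multiplies every own effective effort by `t`, so the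
win probability `p` at a battlefield moves with derivative `γ p q` at `t = 1`, where `q` is the
opponent's. Hence the first-order condition of an equilibrium along this ray reads
`c_i ∑ e_i = γ ∑ v p₁ p₂` for both players. Every battlefield is contested in equilibrium, so
`p₁ + p₂ = 1` there, and both identities follow by summing the payoffs. -/

open Filter Topology

lemma tullock_add_tullock_swap (γ : ℝ) {y₁ y₂ : ℝ} (h₁ : 0 ≤ y₁) (h₂ : 0 ≤ y₂)
    (h : 0 < y₁ + y₂) : tullock γ y₁ y₂ + tullock γ y₂ y₁ = 1 := by
  have hpos : 0 < y₁ ^ γ + y₂ ^ γ := by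
    rcases h₁.lt_or_eq with h₁ | rfl
    · exact add_pos_of_pos_of_nonneg (Real.rpow_pos_of_pos h₁ γ) (Real.rpow_nonneg h₂ γ)
    · exact add_pos_of_nonneg_of_pos (Real.rpow_nonneg le_rfl γ)
        (Real.rpow_pos_of_pos (by linarith) γ)
  rw [tullock, tullock, add_comm (y₂ ^ γ), ← add_div, div_self hpos.ne']

lemma tullock_mono_left {γ y₁ y₁' y₂ : ℝ} (hγ : 0 ≤ γ) (h₁ : 0 ≤ y₁) (h₂ : 0 ≤ y₂)
    (hle : y₁ ≤ y₁') : tullock γ y₁ y₂ ≤ tullock γ y₁' y₂ := by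
  have ha : y₁ ^ γ ≤ y₁' ^ γ := Real.rpow_le_rpow h₁ hle hγ
  have ha₀ : 0 ≤ y₁ ^ γ := Real.rpow_nonneg h₁ γ
  have hb₀ : 0 ≤ y₂ ^ γ := Real.rpow_nonneg h₂ γ
  rcases (add_nonneg ha₀ hb₀).eq_or_lt with h₀ | h₀
  · rw [tullock, ← h₀, div_zero]
    exact div_nonneg (ha₀.trans ha) (by linarith)
  · rw [tullock, tullock, div_le_div_iff₀ h₀ (by linarith)]
    nlinarith [mul_le_mul_of_nonneg_right ha hb₀]

lemma hasDerivAt_tullock_mul_left {γ y₁ y₂ : ℝ} (hγ : 0 < γ) (h₁ : 0 ≤ y₁) (h₂ : 0 ≤ y₂) :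
    HasDerivAt (fun t => tullock γ (t * y₁) y₂)
      (γ * tullock γ y₁ y₂ * tullock γ y₂ y₁) 1 := by
  have ha : 0 ≤ y₁ ^ γ := Real.rpow_nonneg h₁ γ
  have hb : 0 ≤ y₂ ^ γ := Real.rpow_nonneg h₂ γ
  have hfun : (fun t => tullock γ (t * y₁) y₂) =ᶠ[𝓝 1]
      fun t => t ^ γ * y₁ ^ γ / (t ^ γ * y₁ ^ γ + y₂ ^ γ) := by
    filter_upwards [Ioi_mem_nhds one_pos] with t ht
    rw [tullock, Real.mul_rpow ht.le h₁]
  refine HasDerivAt.congr_of_eventuallyEq ?_ hfun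
  rcases eq_or_ne (y₁ ^ γ + y₂ ^ γ) 0 with hab | hab
  · obtain ⟨ha₀, hb₀⟩ : y₁ ^ γ = 0 ∧ y₂ ^ γ = 0 := ⟨by linarith, by linarith⟩
    simpa [tullock, ha₀, hb₀] using hasDerivAt_const (1 : ℝ) (0 : ℝ)
  · have hN : HasDerivAt (fun t : ℝ => t ^ γ * y₁ ^ γ) (γ * y₁ ^ γ) 1 := by
      simpa using (Real.hasDerivAt_rpow_const (Or.inl one_ne_zero)).mul_const (y₁ ^ γ)
    refine (hN.div (hN.add_const _) (by simpa using hab)).congr_deriv ?_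
    simp only [tullock, Real.one_rpow, one_mul]
    rw [add_comm (y₂ ^ γ)]
    field_simp
    ring

lemma effY_nonneg {m : ℕ} {ρ : Matrix (Fin m) (Fin m) ℝ} {e : Fin m → ℝ}
    (hρ : ∀ k l, 0 ≤ ρ k l) (he : ∀ k, 0 ≤ e k) (k : Fin m) : 0 ≤ effY ρ e k :=
  add_nonneg (he k) (sum_nonneg fun l _ => mul_nonneg (hρ l k) (he l))

lemma effY_add {m : ℕ} (ρ : Matrix (Fin m) (Fin m) ℝ) (e f : Fin m → ℝ) (k : Fin m) :
    effY ρ (e + f) k = effY ρ e k + effY ρ f k := by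
  simp only [effY, Pi.add_apply, mul_add, sum_add_distrib]
  ring

lemma effY_smul {m : ℕ} (ρ : Matrix (Fin m) (Fin m) ℝ) (t : ℝ) (e : Fin m → ℝ) (k : Fin m) :
    effY ρ (t • e) k = t * effY ρ e k := by
  simp only [effY, Pi.smul_apply, smul_eq_mul, mul_add, mul_sum]
  congr 1
  exact sum_congr rfl fun l _ => mul_left_comm _ _ _

lemma effY_single_self {m : ℕ} (ρ : Matrix (Fin m) (Fin m) ℝ) (k : Fin m) (ε : ℝ) :
    effY ρ (Pi.single k ε) k = ε := by
  rw [effY, Pi.single_eq_same, sum_eq_zero fun l hl => ?_, add_zero]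
  rw [Pi.single_eq_of_ne (ne_of_mem_erase hl), mul_zero]

lemma payoff_update {m : ℕ} (γ : ℝ) (v : Fin m → ℝ) (c : Fin 2 → ℝ)
    (ρ : Fin 2 → Matrix (Fin m) (Fin m) ℝ) (e : Fin 2 → Fin m → ℝ)
    (i : Fin 2) (e' : Fin m → ℝ) :
    payoff γ v c ρ (Function.update e i e') i =
      (∑ k, v k * tullock γ (effY (ρ i) e' k) (effY (ρ (1 - i)) (e (1 - i)) k))
        - c i * ∑ k, e' k := by
  have hne : 1 - i ≠ i := by fin_cases i <;> decide
  rw [payoff, Function.update_self, Function.update_of_ne hne]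

lemma payoff_add_payoff {m : ℕ} (γ : ℝ) (v : Fin m → ℝ) (c : Fin 2 → ℝ)
    (ρ : Fin 2 → Matrix (Fin m) (Fin m) ℝ) (e : Fin 2 → Fin m → ℝ) :
    payoff γ v c ρ e 0 + payoff γ v c ρ e 1 =
      ∑ k, v k * (eqProb γ ρ e 0 k + eqProb γ ρ e 1 k)
        - (c 0 * ∑ k, e 0 k + c 1 * ∑ k, e 1 k) := by
  simp only [payoff, eqProb, sub_zero, sub_self, mul_add, sum_add_distrib]
  ring

namespace IsNashEq

variable {m : ℕ} {γ : ℝ} {v : Fin m → ℝ} {c : Fin 2 → ℝ}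
  {ρ : Fin 2 → Matrix (Fin m) (Fin m) ℝ} {e : Fin 2 → Fin m → ℝ}

lemma effY_nonneg (hρ : ∀ i k l, 0 ≤ ρ i k l) (he : IsNashEq γ v c ρ e)
    (i : Fin 2) (k : Fin m) : 0 ≤ effY (ρ i) (e i) k :=
  _root_.effY_nonneg (hρ i) (he.1 i) k

/-- If nobody contested battlefield `k`, player `0` could win it outright by an effort
`v k / (2 c 0)` there, at half its value. -/
lemma effY_add_effY_pos (hγ : 0 < γ) (hv : ∀ k, 0 < v k) (hc : ∀ i, 0 < c i)
    (hρ : ∀ i k l, 0 ≤ ρ i k l) (he : IsNashEq γ v c ρ e) (k : Fin m) :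
    0 < effY (ρ 0) (e 0) k + effY (ρ 1) (e 1) k := by
  have hy := he.effY_nonneg hρ
  by_contra! hzero
  have h₀ : effY (ρ 0) (e 0) k = 0 := by linarith [hy 0 k, hy 1 k]
  have h₁ : effY (ρ 1) (e 1) k = 0 := by linarith [hy 0 k, hy 1 k]
  set ε := v k / (2 * c 0)
  have hε : 0 < ε := div_pos (hv k) (by linarith [hc 0])
  have hδ : 0 ≤ Pi.single (M := fun _ => ℝ) k ε := Pi.single_nonneg.mpr hε.le
  set e' := e 0 + Pi.single k ε
  have hdev := he.2 0 e' fun l => add_nonneg (he.1 0 l) (hδ l)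
  rw [payoff_update, payoff] at hdev
  have hcost : ∑ l, e' l = ∑ l, e 0 l + ε := by simp [e', sum_add_distrib]
  set f := fun l => v l * tullock γ (effY (ρ 0) (e 0) l) (effY (ρ 1) (e 1) l)
  set g := fun l => v l * tullock γ (effY (ρ 0) e' l) (effY (ρ 1) (e 1) l)
  have hfg : ∀ l, f l ≤ g l := fun l => mul_le_mul_of_nonneg_left
    (tullock_mono_left hγ.le (hy 0 l) (hy 1 l)
      (by rw [effY_add]; linarith [_root_.effY_nonneg (hρ 0) hδ l])) (hv l).le
  have hfk : f k = 0 := by simp [f, tullock, h₀, h₁, Real.zero_rpow hγ.ne']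
  have hgk : g k = v k := by
    simp [g, tullock, e', effY_add, effY_single_self, h₀, h₁, Real.zero_rpow hγ.ne',
      (Real.rpow_pos_of_pos hε γ).ne']
  have hgain : ∑ l, f l + v k ≤ ∑ l, g l := by
    calc ∑ l, f l + v k = ∑ l, f l + (g k - f k) := by rw [hfk, hgk, sub_zero]
      _ ≤ ∑ l, f l + ∑ l, (g l - f l) := by
        gcongr
        exact single_le_sum (fun l _ => sub_nonneg.mpr (hfg l)) (mem_univ k)
      _ = ∑ l, g l := by rw [sum_sub_distrib]; ring
  have hεc : c 0 * ε = v k / 2 := by simp only [ε]; field_simp [(hc 0).ne']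
  rw [hcost, mul_add, hεc] at hdev
  simp only [sub_zero, f, g] at hdev hgain
  linarith [hv k]

lemma eqProb_add_eqProb (hγ : 0 < γ) (hv : ∀ k, 0 < v k) (hc : ∀ i, 0 < c i)
    (hρ : ∀ i k l, 0 ≤ ρ i k l) (he : IsNashEq γ v c ρ e) (k : Fin m) :
    eqProb γ ρ e 0 k + eqProb γ ρ e 1 k = 1 :=
  tullock_add_tullock_swap γ (he.effY_nonneg hρ 0 k)
    (he.effY_nonneg hρ 1 k) (he.effY_add_effY_pos hγ hv hc hρ k)

/-- First-order condition for scaling one's whole effort vector by `t` around `t = 1`. -/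
lemma cost_eq (hγ : 0 < γ) (hρ : ∀ i k l, 0 ≤ ρ i k l) (he : IsNashEq γ v c ρ e)
    (i : Fin 2) :
    c i * ∑ k, e i k = γ * ∑ k, v k * (eqProb γ ρ e i k * eqProb γ ρ e (1 - i) k) := by
  have hy := he.effY_nonneg hρ
  set F := fun t : ℝ => payoff γ v c ρ (Function.update e i (t • e i)) i
  have hF : F = fun t => ∑ k, v k * tullock γ (t * effY (ρ i) (e i) k)
      (effY (ρ (1 - i)) (e (1 - i)) k) - c i * (t * ∑ k, e i k) := by
    funext t
    simp only [F, payoff_update, effY_smul, Pi.smul_apply, smul_eq_mul, ← mul_sum]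
  have hderiv : HasDerivAt F (∑ k, v k * (γ * eqProb γ ρ e i k * eqProb γ ρ e (1 - i) k)
      - c i * ∑ k, e i k) 1 := by
    rw [hF]
    refine (HasDerivAt.fun_sum fun k _ => ?_).sub ?_
    · simpa only [eqProb, sub_sub_cancel] using
        (hasDerivAt_tullock_mul_left hγ (hy i k) (hy (1 - i) k)).const_mul (v k)
    · simpa using ((hasDerivAt_id (1 : ℝ)).mul_const (∑ k, e i k)).const_mul (c i)
  have hmax : IsLocalMax F 1 := by
    filter_upwards [Ioi_mem_nhds one_pos] with t ht
    simpa [F] using he.2 i (t • e i) fun k => mul_nonneg ht.le (he.1 i k)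
  have hzero := hmax.hasDerivAt_eq_zero hderiv
  have hγS : ∑ k, v k * (γ * eqProb γ ρ e i k * eqProb γ ρ e (1 - i) k)
      = γ * ∑ k, v k * (eqProb γ ρ e i k * eqProb γ ρ e (1 - i) k) := by
    rw [mul_sum]
    exact sum_congr rfl fun k _ => by ring
  linarith

end IsNashEq

theorem equilibrium_welfare_identity_general (m : ℕ) (γ : ℝ) (hγ0 : 0 < γ)
    (v : Fin m → ℝ) (hv : ∀ k, 0 < v k)
    (c : Fin 2 → ℝ) (hc : ∀ i, 0 < c i)
    (ρ : Fin 2 → Matrix (Fin m) (Fin m) ℝ)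
    (hρ : ∀ i k l, 0 ≤ ρ i k l)
    (e : Fin 2 → Fin m → ℝ) (he : IsNashEq γ v c ρ e) :
    payoff γ v c ρ e 0 + payoff γ v c ρ e 1 =
      ∑ k, (1 - 2 * γ * (eqProb γ ρ e 0 k * eqProb γ ρ e 1 k)) * v k ∧
    payoff γ v c ρ e 0 + payoff γ v c ρ e 1 =
      ∑ k, v k - (2 * c 0 * c 1 / (c 0 + c 1)) * ∑ k, (e 0 k + e 1 k) := by
  set S := ∑ k, v k * (eqProb γ ρ e 0 k * eqProb γ ρ e 1 k)
  have hcost₀ : c 0 * ∑ k, e 0 k = γ * S := he.cost_eq hγ0 hρ 0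
  have hcost₁ : c 1 * ∑ k, e 1 k = γ * S := by
    simpa only [sub_self, mul_comm (eqProb γ ρ e 1 _)] using he.cost_eq hγ0 hρ 1
  have hwelfare : payoff γ v c ρ e 0 + payoff γ v c ρ e 1 = ∑ k, v k - 2 * γ * S := by
    simp only [payoff_add_payoff, he.eqProb_add_eqProb hγ0 hv hc hρ, mul_one, hcost₀, hcost₁]
    ring
  have hc₀₁ : c 0 + c 1 ≠ 0 := by linarith [hc 0, hc 1]
  refine ⟨?_, ?_⟩
  · simp only [hwelfare, sub_mul, one_mul, sum_sub_distrib, S, mul_sum]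
    congr 1
    exact sum_congr rfl fun k _ => by ring
  · rw [hwelfare, sum_add_distrib]
    field_simp
    linear_combination 2 * c 1 * hcost₀ + 2 * c 0 * hcost₁

/-- equilibrium social welfare identity. -/
theorem equilibrium_welfare_identity (m : ℕ) (γ : ℝ) (hγ0 : 0 < γ) (hγ1 : γ ≤ 1)
    (v : Fin m → ℝ) (hv : ∀ k, 0 < v k)
    (c : Fin 2 → ℝ) (hc : ∀ i, 0 < c i)
    (ρ : Fin 2 → Matrix (Fin m) (Fin m) ℝ)
    (hρ : ∀ i k l, 0 ≤ ρ i k l) (hρd : ∀ i k, ρ i k k = 0)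
    (e : Fin 2 → Fin m → ℝ) (he : IsNashEq γ v c ρ e) :
    payoff γ v c ρ e 0 + payoff γ v c ρ e 1 =
      ∑ k, (1 - 2 * γ * (eqProb γ ρ e 0 k * eqProb γ ρ e 1 k)) * v k ∧
    payoff γ v c ρ e 0 + payoff γ v c ρ e 1 =
      ∑ k, v k - (2 * c 0 * c 1 / (c 0 + c 1)) * ∑ k, (e 0 k + e 1 k) :=
  equilibrium_welfare_identity_general m γ hγ0 v hv c hc ρ hρ e he
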